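/- arXiv:1508.02426 — 4 statements merged into one kernel-verified Lean document; each statement's English description precedes it below -/
import Mathlib

section
/- Let G be a forest (a simple graph with no cycles) with at least three vertices that contains no good pair, i.e. no pair of distinct vertices x ≠ y with N_G(x) ⊆ N_G(y). Then every connected component of G is a single edge; in particular G is a perfect matching on its vertex set. -/
open SimpleGraph

/-- A forest on at least three vertices with no good pair is a perfect
matching: every vertex has degree exactly 1 (so every component is a
single edge). -/
theorem forest_no_good_pair_is_matching {V : Type*} [Fintype V]
    (G : SimpleGraph V) [DecidableRel G.Adj]
    (hcard : 3 ≤ Fintype.card V) (hforest : G.IsAcyclic)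
    (hgood : ∀ x y : V, x ≠ y → ¬ (G.neighborSet x ⊆ G.neighborSet y)) :
    ∀ v : V, G.degree v = 1 := by
  classical
  -- Step 1: every vertex has positive degree
  have hpos : ∀ v : V, 0 < G.degree v := by
    intro v
    by_contra h
    push_neg at h
    obtain ⟨y, hy⟩ := Fintype.exists_ne_of_one_lt_card (by omega) v
    refine hgood v y hy.symm ?_
    intro z hz
    exfalso
    have : 0 < G.degree v := (G.degree_pos_iff_exists_adj _).mpr ⟨z, hz⟩
    omega
  -- Step 2: if x is a leaf and z its neighbor, all neighbors of z equal x
  have hclaim : ∀ x : V, G.degree x = 1 → ∀ z : V, G.Adj x z →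
      ∀ u : V, G.Adj z u → u = x := by
    intro x hx z hxz u hzu
    by_contra hux
    refine hgood x u (Ne.symm hux) ?_
    intro w hw
    have hz' : z ∈ G.neighborFinset x := (G.mem_neighborFinset _ _).mpr hxz
    have hw' : w ∈ G.neighborFinset x := (G.mem_neighborFinset _ _).mpr hw
    have hwz : w = z := by
      have h1 : (G.neighborFinset x).card = 1 := hx
      rw [Finset.card_eq_one] at h1
      obtain ⟨a, ha⟩ := h1
      rw [ha, Finset.mem_singleton] at hz' hw'
      rw [hz', hw']
    rw [hwz]
    exact hzu.symm
  -- Step 3: component of a leaf x with neighbor z is {x, z}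
  have hreachpair : ∀ x z : V, G.degree x = 1 → G.Adj x z →
      ∀ (a b : V) (p : G.Walk a b), (a = x ∨ a = z) → (b = x ∨ b = z) := by
    intro x z hx hxz a b p
    induction p with
    | nil => exact fun h => h
    | @cons a' c b' hadj q ih =>
      intro hc
      apply ih
      rcases hc with hc | hc
      · subst hc
        right
        have hd : c ∈ G.neighborFinset a' := (G.mem_neighborFinset _ _).mpr hadj
        have hz' : z ∈ G.neighborFinset a' := (G.mem_neighborFinset _ _).mpr hxz
        have h1 : (G.neighborFinset a').card = 1 := hx
        rw [Finset.card_eq_one] at h1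
        obtain ⟨e, he⟩ := h1
        rw [he, Finset.mem_singleton] at hd hz'
        rw [hd, hz']
      · subst hc
        left
        exact hclaim x hx a' hxz c hadj
  intro v
  by_contra hv
  have hv2 : 2 ≤ G.degree v := by have := hpos v; omega
  -- every vertex reachable from v has degree ≥ 2
  have hreach : ∀ x : V, G.Reachable v x → 2 ≤ G.degree x := by
    intro x hx
    by_contra h
    push_neg at h
    have hx1 : G.degree x = 1 := by have := hpos x; omega
    obtain ⟨z, hxz⟩ := (G.degree_pos_iff_exists_adj _).mp (hpos x)
    obtain ⟨p⟩ := hx.symm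
    have hvxz := hreachpair x z hx1 hxz x v p (Or.inl rfl)
    rcases hvxz with h' | h'
    · exact hv (h' ▸ hx1)
    · subst h'
      have hz1 : G.degree v = 1 := by
        have hx' : x ∈ G.neighborFinset v := (G.mem_neighborFinset _ _).mpr hxz.symm
        have hns : G.neighborFinset v = {x} := by
          apply Finset.eq_singleton_iff_unique_mem.mpr
          exact ⟨hx', fun u hu =>
            hclaim x hx1 v hxz u ((G.mem_neighborFinset _ _).mp hu)⟩
        rw [SimpleGraph.degree, hns, Finset.card_singleton]
      exact hv hz1
  -- build arbitrarily long paths ending at v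
  have key : ∀ n : ℕ, ∃ (u : V) (p : G.Walk u v), p.IsPath ∧ p.length = n := by
    intro n
    induction n with
    | zero => exact ⟨v, SimpleGraph.Walk.nil, SimpleGraph.Walk.IsPath.nil, rfl⟩
    | succ n ih =>
      obtain ⟨u, p, hp, hl⟩ := ih
      have hu2 : 2 ≤ G.degree u := hreach u (SimpleGraph.Reachable.symm ⟨p⟩)
      cases p with
      | nil =>
        obtain ⟨w, hw⟩ :=
          (G.degree_pos_iff_exists_adj _).mp (by omega : 0 < G.degree v)
        refine ⟨w, SimpleGraph.Walk.cons hw.symm SimpleGraph.Walk.nil, ?_, ?_⟩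
        · simp [SimpleGraph.Walk.cons_isPath_iff, hw.ne']
        · simp at hl ⊢; omega
      | @cons _ t _ h q =>
        have ht : t ∈ G.neighborFinset u := (G.mem_neighborFinset _ _).mpr h
        obtain ⟨w, hwmem, hwt⟩ := Finset.exists_mem_ne (by
          show 1 < (G.neighborFinset u).card
          rw [← SimpleGraph.degree]; omega) t
        have haw : G.Adj u w := (G.mem_neighborFinset _ _).mp hwmem
        by_cases hsup : w ∈ (SimpleGraph.Walk.cons h q).support
        · -- build a cycle, contradiction
          exfalso
          have hwu : w ≠ u := haw.ne'
          have hwq : w ∈ q.support := by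
            rw [SimpleGraph.Walk.support_cons, List.mem_cons] at hsup
            tauto
          have hqpath : q.IsPath := hp.of_cons
          have hq'path : (q.takeUntil w hwq).IsPath := hqpath.takeUntil hwq
          have hunotq : u ∉ q.support :=
            ((SimpleGraph.Walk.cons_isPath_iff h q).mp hp).2
          have hunotq' : u ∉ (q.takeUntil w hwq).support := fun hc =>
            hunotq (SimpleGraph.Walk.support_takeUntil_subset q hwq hc)
          have hPpath : (SimpleGraph.Walk.cons h (q.takeUntil w hwq)).IsPath :=
            hq'path.cons hunotq'
          have hcyc : (SimpleGraph.Walk.cons haw.symm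
              (SimpleGraph.Walk.cons h (q.takeUntil w hwq))).IsCycle := by
            rw [SimpleGraph.Walk.cons_isCycle_iff]
            refine ⟨hPpath, ?_⟩
            rw [SimpleGraph.Walk.edges_cons, List.mem_cons]
            rintro (he | he)
            · rw [Sym2.eq_iff] at he
              rcases he with ⟨h1, _⟩ | ⟨h1, _⟩
              · exact hwu h1
              · exact hwt h1
            · exact hunotq' ((q.takeUntil w hwq).snd_mem_support_of_mem_edges he)
          exact hforest _ hcyc
        · refine ⟨w, SimpleGraph.Walk.cons haw.symm (SimpleGraph.Walk.cons h q),
            hp.cons hsup, ?_⟩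
          simp at hl ⊢; omega
  obtain ⟨u, p, hp, hl⟩ := key (Fintype.card V)
  have := hp.length_lt
  omega
end

section
/- Let G be a simple graph and u a vertex having a simplicial neighbour v. Then every independent set of G contained in V(G) \ N_G[u] remains independent after adjoining v; in particular, the link of u in Ind(G) is contained in a cone with apex v inside Ind(G) \ {u}. -/
/-- If `v` is a simplicial neighbour of `u`, then every independent set of `G`
avoiding `N[u]` remains independent after adjoining `v`; i.e. the link of `u`
in `Ind(G)` is contained in a cone with apex `v` inside `Ind(G) \ u`. -/
theorem link_in_cone_of_simplicial_neighbour {V : Type*} (G : SimpleGraph V)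
    (u v : V) (huv : G.Adj u v) (hv : G.IsClique (G.neighborSet v)) :
    ∀ S : Set V, S.Pairwise (fun a b => ¬ G.Adj a b) →
      S ⊆ (insert u (G.neighborSet u))ᶜ →
      (insert v S).Pairwise (fun a b => ¬ G.Adj a b) := by
  intro S hS hSc
  have key : ∀ a ∈ S, ¬ G.Adj v a := by
    intro a ha hadj
    have haN : a ∉ insert u (G.neighborSet u) := hSc ha
    have hau : a ≠ u := fun h => haN (h ▸ Set.mem_insert _ _)
    have : G.Adj u a := hv huv.symm hadj hau.symm
    exact haN (Set.mem_insert_iff.mpr (Or.inr this))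
  haveI : Std.Symm (fun a b => ¬ G.Adj a b) := ⟨fun a b h => h ∘ SimpleGraph.Adj.symm⟩
  refine Set.pairwise_insert_of_symm |>.mpr
    ⟨hS, fun a ha _ => key a ha⟩
end

section
/- Let G be a graph admitting a tree model T, let u be a vertex of G, and let (x,y) be a pair of distinct vertices of G \ N_G[u] such that N_{G\N_G[u]}(x) ⊆ N_{G\N_G[u]}(y) and, in T, every shortest path from an x-node to a u-node contains a y-node. Then (x,y) is a good pair in G, i.e. N_G(x) ⊆ N_G(y). -/
/-- Lemma 3.2(b): if `(x,y)` is a good pair in `G \ N[u]` and in the tree model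
`T` every path from an `x`-node to a `u`-node contains a `y`-node, then `(x,y)`
is a good pair in `G`. -/
theorem good_pair_promotion {V N : Type*} (G : SimpleGraph V)
    (T : SimpleGraph N) (hT : T.IsTree) (f : V → Set N)
    (hsub : ∀ v : V, (f v).Nonempty ∧ (SimpleGraph.induce (f v) T).Connected)
    (hadj : ∀ v w : V, G.Adj v w ↔ v ≠ w ∧ (f v ∩ f w).Nonempty)
    (u x y : V) (hxy : x ≠ y)
    (hx : x ∉ insert u (G.neighborSet u)) (hy : y ∉ insert u (G.neighborSet u))
    (hgood : ∀ z : V, z ∉ insert u (G.neighborSet u) → G.Adj x z → G.Adj y z)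
    (hpath : ∀ a ∈ f x, ∀ b ∈ f u, ∀ p : T.Walk a b, p.IsPath →
      ∃ n ∈ p.support, n ∈ f y) :
    G.neighborSet x ⊆ G.neighborSet y := by
  classical
  intro z hz
  simp only [SimpleGraph.mem_neighborSet] at hz ⊢
  by_cases hzN : z ∈ insert u (G.neighborSet u)
  · have hyz : y ≠ z := by rintro rfl; exact hy hzN
    obtain ⟨hxz, a, hax, haz⟩ := (hadj x z).1 hz
    have hb : ∃ b, b ∈ f z ∧ b ∈ f u := by
      rcases hzN with rfl | hzu
      · exact ⟨a, haz, haz⟩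
      · simp only [SimpleGraph.mem_neighborSet] at hzu
        obtain ⟨_, b, hbu, hbz⟩ := (hadj u z).1 hzu
        exact ⟨b, hbz, hbu⟩
    obtain ⟨b, hbz, hbu⟩ := hb
    obtain ⟨w⟩ := (hsub z).2 ⟨a, haz⟩ ⟨b, hbz⟩
    let w' : T.Walk a b := w.map (SimpleGraph.Embedding.induce (f z)).toHom
    have hsup : ∀ n ∈ w'.support, n ∈ f z := by
      intro n hn
      change n ∈ (w.map _).support at hn
      rw [SimpleGraph.Walk.support_map] at hn
      obtain ⟨⟨m, hm⟩, _, rfl⟩ := List.mem_map.1 hn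
      exact hm
    obtain ⟨n, hn, hny⟩ := hpath a hax b hbu w'.bypass w'.bypass_isPath
    have hnz := hsup n (w'.support_bypass_subset hn)
    exact (hadj y z).2 ⟨hyz, n, hny, hnz⟩
  · exact hgood z hzN hz
end

section
/- Every graph admitting a tree model is chordal: if T is a tree and each vertex v of G is assigned a nonempty subtree T_v of T such that v,w are adjacent in G iff T_v and T_w share a node, then G has no induced cycle of length at least 4. -/
/-- A graph is chordal if it has no induced cycle of length at least 4. -/
def Chordal {V : Type*} (G : SimpleGraph V) : Prop :=
  ∀ n : ℕ, 4 ≤ n → IsEmpty (SimpleGraph.cycleGraph n ↪g G)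

private lemma exists_walk_in_set {N : Type*} (T : SimpleGraph N) (S : Set N)
    (hc : (SimpleGraph.induce S T).Connected) {a b : N} (ha : a ∈ S) (hb : b ∈ S) :
    ∃ w : T.Walk a b, ∀ x ∈ w.support, x ∈ S := by
  obtain ⟨w⟩ := hc ⟨a, ha⟩ ⟨b, hb⟩
  refine ⟨w.map (SimpleGraph.Embedding.induce S).toHom, ?_⟩
  intro x hx
  have hx' : x ∈ w.support.map (SimpleGraph.Embedding.induce (G := T) S).toHom := by
    rw [← SimpleGraph.Walk.support_map]; exact hx
  obtain ⟨y, -, rfl⟩ := List.mem_map.mp hx'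
  exact y.2

open Fin.NatCast

/-- Every graph admitting a tree model is chordal. -/
theorem tree_model_chordal {V N : Type*} (G : SimpleGraph V)
    (T : SimpleGraph N) (hT : T.IsTree) (f : V → Set N)
    (hsub : ∀ v : V, (f v).Nonempty ∧ (SimpleGraph.induce (f v) T).Connected)
    (hadj : ∀ v w : V, G.Adj v w ↔ v ≠ w ∧ (f v ∩ f w).Nonempty) :
    Chordal G := by
  classical
  intro n hn
  constructor
  intro φ
  haveI : NeZero n := ⟨by omega⟩
  set S : Fin n → Set N := fun i => f (φ i) with hSdef
  have hconn : ∀ i, (SimpleGraph.induce (S i) T).Connected := fun i => (hsub (φ i)).2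
  have hSadj : ∀ i j : Fin n, i ≠ j → (S i ∩ S j).Nonempty →
      (SimpleGraph.cycleGraph n).Adj i j := by
    intro i j hij hne
    exact φ.map_rel_iff.mp ((hadj _ _).2 ⟨fun h => hij (φ.injective h), hne⟩)
  have hone : (1 : Fin n).val = 1 := by
    rw [show (1 : Fin n) = ((1 : ℕ) : Fin n) by norm_cast, Fin.val_natCast]
    exact Nat.mod_eq_of_lt (by omega)
  have hzero : (0 : Fin n).val = 0 := by
    rw [show (0 : Fin n) = ((0 : ℕ) : Fin n) by norm_cast, Fin.val_natCast]
    exact Nat.zero_mod n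
  -- value-level description of adjacency in the cycle
  have hA : ∀ u v : Fin n, (SimpleGraph.cycleGraph n).Adj u v →
      (u.val = v.val + 1 ∨ v.val = u.val + 1 ∨ (u.val = 0 ∧ v.val + 1 = n) ∨
        (v.val = 0 ∧ u.val + 1 = n)) := by
    intro u v huv
    rw [SimpleGraph.cycleGraph_adj'] at huv
    rcases huv with h | h
    · have h1 : u - v = 1 := Fin.ext (by rw [hone]; exact h)
      have h2 : u = 1 + v := by rwa [sub_eq_iff_eq_add] at h1
      have huval : u.val = (1 + v.val) % n := by rw [h2, Fin.add_def, hone]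
      rcases Nat.lt_or_ge (1 + v.val) n with hlt | hge
      · left; rw [Nat.mod_eq_of_lt hlt] at huval; omega
      · have hv := v.isLt
        have he : 1 + v.val = n := by omega
        rw [he, Nat.mod_self] at huval
        right; right; left; exact ⟨huval, by omega⟩
    · have h1 : v - u = 1 := Fin.ext (by rw [hone]; exact h)
      have h2 : v = 1 + u := by rwa [sub_eq_iff_eq_add] at h1
      have hvval : v.val = (1 + u.val) % n := by rw [h2, Fin.add_def, hone]
      rcases Nat.lt_or_ge (1 + u.val) n with hlt | hge
      · right; left; rw [Nat.mod_eq_of_lt hlt] at hvval; omega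
      · have hu := u.isLt
        have he : 1 + u.val = n := by omega
        rw [he, Nat.mod_self] at hvval
        right; right; right; exact ⟨hvval, by omega⟩
  -- consecutive vertices of the cycle are adjacent
  have hc01 : ∀ i : Fin n, (SimpleGraph.cycleGraph n).Adj i (i + 1) := by
    intro i
    rw [SimpleGraph.cycleGraph_adj']
    right
    rw [add_sub_cancel_left]
    exact hone
  have hconsec : ∀ i : Fin n, (S i ∩ S (i + 1)).Nonempty :=
    fun i => ((hadj _ _).1 (φ.map_rel_iff.2 (hc01 i))).2
  choose t ht using hconsec
  -- walks between consecutive chosen points, inside the corresponding subtree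
  have hQex : ∀ i : Fin n, ∃ w : T.Walk (t i) (t (i + 1)), ∀ x ∈ w.support, x ∈ S (i + 1) :=
    fun i => exists_walk_in_set T (S (i + 1)) (hconn (i + 1)) (ht i).2 (ht (i + 1)).1
  choose Q hQ using hQex
  -- the big walk from t 1 back to t 0 avoiding Q 0
  have bigwalk : ∀ k : ℕ, k < n → ∃ W : T.Walk (t 1) (t ((k : Fin n) + 1)),
      ∀ e ∈ W.edges, ∃ i : Fin n, i ≠ 0 ∧ e ∈ (Q i).edges := by
    intro k
    induction k with
    | zero =>
      intro _
      refine ⟨SimpleGraph.Walk.nil.copy rfl (by norm_num), ?_⟩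
      intro e he
      rw [SimpleGraph.Walk.edges_copy] at he
      simp at he
    | succ k ih =>
      intro hk
      obtain ⟨W, hW⟩ := ih (by omega)
      have hcast : ((k + 1 : ℕ) : Fin n) = (k : Fin n) + 1 := by push_cast; ring
      refine ⟨(W.append (Q ((k : Fin n) + 1))).copy rfl (by rw [hcast]), ?_⟩
      intro e he
      rw [SimpleGraph.Walk.edges_copy, SimpleGraph.Walk.edges_append, List.mem_append] at he
      rcases he with he | he
      · exact hW e he
      · refine ⟨(k : Fin n) + 1, ?_, he⟩
        have hkv : ((k : Fin n)).val = k := by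
          rw [Fin.val_natCast]; exact Nat.mod_eq_of_lt (by omega)
        have hkv1 : ((k : Fin n) + 1).val = k + 1 := by
          rw [Fin.add_def, hone, hkv]; exact Nat.mod_eq_of_lt hk
        intro h0
        rw [h0, hzero] at hkv1
        omega
  obtain ⟨W0, hW0⟩ := bigwalk (n - 1) (by omega)
  have hend : ((n - 1 : ℕ) : Fin n) + 1 = 0 := by
    have h1 : ((n - 1 : ℕ) : Fin n) + 1 = ((n - 1 + 1 : ℕ) : Fin n) := by push_cast; ring
    rw [h1, show n - 1 + 1 = n by omega, Fin.natCast_self]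
  set W : T.Walk (t 1) (t 0) := W0.copy rfl (by rw [hend]) with hWdef
  have hW : ∀ e ∈ W.edges, ∃ i : Fin n, i ≠ 0 ∧ e ∈ (Q i).edges := by
    intro e he
    rw [hWdef, SimpleGraph.Walk.edges_copy] at he
    exact hW0 e he
  -- the minimal path from S 0 ∩ S 1 to t 1 inside S 1
  have ht01 : t 0 ∈ S 1 := by have := (ht 0).2; rwa [zero_add] at this
  obtain ⟨w0, hw0⟩ := exists_walk_in_set T (S 1) (hconn 1) ht01 (ht 1).1
  have hPne : ∃ m : ℕ, ∃ t0, t0 ∈ S 0 ∩ S 1 ∧ ∃ p : T.Walk t0 (t 1),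
      p.IsPath ∧ (∀ x ∈ p.support, x ∈ S 1) ∧ p.length = m :=
    ⟨w0.bypass.length, t 0, ⟨(ht 0).1, ht01⟩, w0.bypass, w0.bypass_isPath,
      fun x hx => hw0 x (w0.support_bypass_subset hx), rfl⟩
  obtain ⟨t0, ⟨ht00, ht01'⟩, p, hpath, hpsupp, hplen⟩ := Nat.find_spec hPne
  by_cases hne : t0 = t 1
  · -- then S 0 and S 2 intersect: contradiction
    have h02 : (S 0 ∩ S (1 + 1)).Nonempty := ⟨t0, ht00, hne ▸ (ht 1).2⟩
    have htwo : ((1 : Fin n) + 1).val = 2 := by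
      rw [Fin.add_def, hone]; exact Nat.mod_eq_of_lt (by omega)
    have hne02 : (0 : Fin n) ≠ 1 + 1 := fun h => by
      rw [Fin.ext_iff, hzero, htwo] at h; omega
    have := hA _ _ (hSadj 0 (1 + 1) hne02 h02)
    rw [hzero, htwo] at this
    omega
  · have hnotnil : ¬p.Nil := SimpleGraph.Walk.not_nil_of_ne hne
    obtain ⟨x, hax, q, rfl⟩ := SimpleGraph.Walk.not_nil_iff.mp hnotnil
    have hq : q.IsPath ∧ t0 ∉ q.support := (SimpleGraph.Walk.cons_isPath_iff _ _).mp hpath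
    have hxS1 : x ∈ S 1 := hpsupp x (by
      rw [SimpleGraph.Walk.support_cons]
      exact List.mem_cons_of_mem _ q.start_mem_support)
    have henotq : s(t0, x) ∉ q.edges := fun h => hq.2 (q.fst_mem_support_of_mem_edges h)
    have hbridge : ¬(T \ SimpleGraph.fromEdgeSet {s(t0, x)}).Reachable t0 x :=
      (SimpleGraph.isBridge_iff).mp
        ((SimpleGraph.isAcyclic_iff_forall_adj_isBridge.mp hT.IsAcyclic) hax)
    -- a closing walk from t 0 back to t0 inside S 0
    obtain ⟨R, hR⟩ := exists_walk_in_set T (S 0) (hconn 0) (ht 0).1 ht00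
    -- minimality: x cannot be in S 0
    have hxmin : x ∉ S 0 := by
      intro hx0
      have hlt : q.length < Nat.find hPne := by
        rw [← hplen, SimpleGraph.Walk.length_cons]; omega
      exact Nat.find_min hPne hlt ⟨x, ⟨hx0, hxS1⟩, q, hq.1,
        (fun y hy => hpsupp y (by
          rw [SimpleGraph.Walk.support_cons]; exact List.mem_cons_of_mem _ hy)), rfl⟩
    -- the edge s(t0, x) must be crossed by the rest of the cycle
    have hmem : s(t0, x) ∈ W.edges ∨ s(t0, x) ∈ R.edges := by
      by_contra hnm
      push_neg at hnm
      apply hbridge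
      refine (SimpleGraph.reachable_delete_edges_iff_exists_walk (G := T)).mpr ?_
      refine ⟨(q.append (W.append R)).reverse, ?_⟩
      rw [SimpleGraph.Walk.edges_reverse, List.mem_reverse,
        SimpleGraph.Walk.edges_append, SimpleGraph.Walk.edges_append,
        List.mem_append, List.mem_append]
      rintro (h | h | h)
      · exact henotq h
      · exact hnm.1 h
      · exact hnm.2 h
    rcases hmem with hmem | hmem
    · -- crossed by some Q i
      obtain ⟨i, hi0, hie⟩ := hW _ hmem
      have ht0j : t0 ∈ S (i + 1) := hQ i t0 ((Q i).fst_mem_support_of_mem_edges hie)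
      have hxj : x ∈ S (i + 1) := hQ i x ((Q i).snd_mem_support_of_mem_edges hie)
      by_cases hj0 : i + 1 = 0
      · exact hxmin (hj0 ▸ hxj)
      · have hj1 : i + 1 ≠ 1 := by
          intro h
          apply hi0
          have : i + 1 = 0 + 1 := by rw [h, zero_add]
          exact add_right_cancel this
        have hadjj0 := hA _ _ (hSadj (i + 1) 0 hj0 ⟨t0, ht0j, ht00⟩)
        have hadjj1 := hA _ _ (hSadj (i + 1) 1 hj1 ⟨x, hxj, hxS1⟩)
        rw [hzero] at hadjj0
        rw [hone] at hadjj1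
        have hjv0 : (i + 1 : Fin n).val ≠ 0 := fun h => hj0 (Fin.ext (by rw [h, hzero]))
        have hjv1 : (i + 1 : Fin n).val ≠ 1 := fun h => hj1 (Fin.ext (by rw [h, hone]))
        have := (i + 1 : Fin n).isLt
        omega
    · -- crossed by the closing walk R, inside S 0
      exact hxmin (hR x (R.snd_mem_support_of_mem_edges hmem))
end
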